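/- arXiv:1711.10227 — 8 statements merged into one kernel-verified Lean document; each statement's English description precedes it below -/
import Mathlib

section
/- Let G be a finite simple graph, s a vertex of G, and S a valid strategy for the firefighting process on (G, s). Then the set of vertices burned by S equals the set of vertices reachable from s in the induced subgraph G ∖ S; in particular, the number of vertices burned by S equals the number of vertices reachable from s in G ∖ S. -/
open SimpleGraph

variable {V : Type*}

/-- The set of vertices burned by the end of time step `i` (0-indexed: `burnt G s S i` is `B_i`),
when a fire starts at `s` and the firefighter defends the vertices of the list `S` in order. -/
def burnt (G : SimpleGraph V) (s : V) (S : List V) : ℕ → Set V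
  | 0 => {s}
  | i + 1 => burnt G s S i ∪
      {u | u ∉ S.take (i + 1) ∧ ∃ b ∈ burnt G s S i, G.Adj u b}

/-- The set of all vertices ever burned by the strategy `S`. -/
def BurntSet (G : SimpleGraph V) (s : V) (S : List V) : Set V := ⋃ i, burnt G s S i

/-- A strategy is a sequence of pairwise distinct vertices; it is valid if the vertex defended
at each step is not yet burning at the start of that step. -/
def ValidStrategy (G : SimpleGraph V) (s : V) (S : List V) : Prop :=
  S.Nodup ∧ ∀ (i : ℕ) (h : i < S.length), S.get ⟨i, h⟩ ∉ burnt G s S i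

/-- The number of vertices saved (i.e. not burned) by the strategy `S`. -/
noncomputable def sav (G : SimpleGraph V) (s : V) (S : List V) : ℕ := (BurntSet G s S)ᶜ.ncard

/-- A valid strategy is minimal if every proper subsequence of it which is itself a valid
strategy saves strictly fewer vertices. -/
def MinimalStrategy (G : SimpleGraph V) (s : V) (S : List V) : Prop :=
  ValidStrategy G s S ∧ ∀ S' : List V, S'.Sublist S → S' ≠ S → ValidStrategy G s S' →
    sav G s S' < sav G s S

/-- A strategy is optimal if it is minimal and saves the maximum number of vertices. -/
def OptimalStrategy (G : SimpleGraph V) (s : V) (S : List V) : Prop :=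
  MinimalStrategy G s S ∧ ∀ S' : List V, ValidStrategy G s S' → sav G s S' ≤ sav G s S

/-- A walk is an induced path if it is a path and the subgraph induced on its vertices has no
edges besides the edges of the path. -/
def IsInducedPath (G : SimpleGraph V) {a b : V} (p : G.Walk a b) : Prop :=
  p.IsPath ∧ ∀ x ∈ p.support, ∀ y ∈ p.support, G.Adj x y → p.toSubgraph.Adj x y

/-- `u` is reachable from `s` in the subgraph of `G` induced on the complement of `A`. -/
def ReachAvoiding (G : SimpleGraph V) (A : Set V) (s u : V) : Prop :=
  ∃ p : G.Walk s u, ∀ x ∈ p.support, x ∉ A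

/-! A vertex of a valid strategy never burns: before its turn by validity, from its turn on
because it is defended. So the fire spreads exactly along the edges of `G ∖ S`, one edge per
step, and burns precisely the component of `s` in `G ∖ S`. -/

namespace ReachAvoiding

variable {G : SimpleGraph V} {A : Set V}

lemma refl {s : V} (hs : s ∉ A) : ReachAvoiding G A s s :=
  ⟨Walk.nil, by simpa using hs⟩

lemma concat {s b u : V} (h : ReachAvoiding G A s b) (hbu : G.Adj b u) (hu : u ∉ A) :
    ReachAvoiding G A s u := by
  obtain ⟨p, hp⟩ := h
  refine ⟨p.concat hbu, fun x hx => ?_⟩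
  rw [Walk.support_concat, List.mem_append, List.mem_singleton] at hx
  rcases hx with hx | rfl
  exacts [hp x hx, hu]

lemma of_adj_closed {P : V → Prop} (hP : ∀ b u, P b → G.Adj b u → u ∉ A → P u) {s u : V}
    (hs : P s) (h : ReachAvoiding G A s u) : P u := by
  obtain ⟨p, hp⟩ := h
  induction p with
  | nil => exact hs
  | cons hab q ih =>
    exact ih (hP _ _ hs hab (hp _ (by simp))) fun x hx => hp x (by simp [hx])

end ReachAvoiding

section Burnt

variable {G : SimpleGraph V} {s : V} {S : List V}

lemma burnt_mono : Monotone (burnt G s S) :=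
  monotone_nat_of_le_succ fun _ => Set.subset_union_left

lemma mem_burnt_succ_of_adj {i : ℕ} {u b : V} (hu : u ∉ S) (hb : b ∈ burnt G s S i)
    (hub : G.Adj u b) : u ∈ burnt G s S (i + 1) :=
  Or.inr ⟨fun h => hu (List.mem_of_mem_take h), b, hb, hub⟩

lemma mem_burnt_of_mem_take_succ {j k : ℕ} {v : V} (hv : v ∈ S.take (j + 1))
    (hvk : v ∈ burnt G s S k) : v ∈ burnt G s S j := by
  induction k with
  | zero => exact burnt_mono (Nat.zero_le j) hvk
  | succ k ih =>
    rcases Nat.lt_or_ge j (k + 1) with hjk | hkj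
    · rcases hvk with hvk | ⟨hnot, -⟩
      · exact ih hvk
      · exact absurd (List.take_subset_take_left S (by omega) hv) hnot
    · exact burnt_mono hkj hvk

lemma ValidStrategy.not_mem_of_mem_burnt (hS : ValidStrategy G s S) {i : ℕ} {v : V}
    (hv : v ∈ burnt G s S i) : v ∉ S := by
  intro hvS
  obtain ⟨j, hj, rfl⟩ := List.getElem_of_mem hvS
  have hdefended : S[j] ∈ S.take (j + 1) := List.mem_take_iff_getElem.2 ⟨j, by omega, rfl⟩
  exact hS.2 j hj (mem_burnt_of_mem_take_succ hdefended hv)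

lemma ValidStrategy.reachAvoiding_of_mem_burnt (hS : ValidStrategy G s S) {i : ℕ} {u : V}
    (hu : u ∈ burnt G s S i) : ReachAvoiding G {x | x ∈ S} s u := by
  induction i generalizing u with
  | zero =>
    have hus : u = s := hu
    subst hus
    exact .refl (hS.not_mem_of_mem_burnt (i := 0) rfl)
  | succ i ih =>
    rcases hu with hu | hnew
    · exact ih hu
    · have huS := hS.not_mem_of_mem_burnt (i := i + 1) (Or.inr hnew)
      obtain ⟨-, b, hb, hub⟩ := hnew
      exact (ih hb).concat hub.symm huS

end Burnt

theorem burned_eq_reachable_general {V : Type*} (G : SimpleGraph V) (s : V)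
    (S : List V) (hS : ValidStrategy G s S) :
    BurntSet G s S = {u : V | ReachAvoiding G {x | x ∈ S} s u} ∧
    (BurntSet G s S).ncard = {u : V | ReachAvoiding G {x | x ∈ S} s u}.ncard := by
  have heq : BurntSet G s S = {u : V | ReachAvoiding G {x | x ∈ S} s u} := by
    ext u
    simp only [BurntSet, Set.mem_iUnion, Set.mem_ofPred_eq]
    constructor
    · rintro ⟨i, hu⟩
      exact hS.reachAvoiding_of_mem_burnt hu
    · refine ReachAvoiding.of_adj_closed (P := fun u => ∃ i, u ∈ burnt G s S i) ?_ ⟨0, rfl⟩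
      rintro b u ⟨i, hb⟩ hbu hu
      exact ⟨i + 1, mem_burnt_succ_of_adj hu hb hbu.symm⟩
  exact ⟨heq, congrArg Set.ncard heq⟩

/-- For a valid strategy `S`, the set of vertices burned by `S` equals the set of
vertices reachable from `s` in `G ∖ S`; in particular the number of burned vertices equals the
number of vertices reachable from `s` in `G ∖ S`. -/
theorem burned_eq_reachable {V : Type*} [Fintype V] (G : SimpleGraph V) (s : V)
    (S : List V) (hS : ValidStrategy G s S) :
    BurntSet G s S = {u : V | ReachAvoiding G {x | x ∈ S} s u} ∧
    (BurntSet G s S).ncard = {u : V | ReachAvoiding G {x | x ∈ S} s u}.ncard :=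
  burned_eq_reachable_general G s S hS
end

section
/- Let G be a finite simple graph and X ⊆ V(G) with |X| = k such that G ∖ X is a threshold graph. Then every induced path in G has at most 2k + 3 vertices, i.e., length at most 2k + 2. -/
/-! Put `v_t := p.getVert t`. If `p` had length at least `2k + 3`, the `k + 2` disjoint edges
`v_{2j} v_{2j+1}`, `j < k + 2`, could not all meet the `k` vertices of `X`, so two of them, say
for `i < j`, lie in `G ∖ X`. As `p` is induced, they span an induced `2K₂` there, which a threshold
graph cannot contain: comparing the neighbourhoods of `v_{2i}` and `v_{2j+1}` forces one of the
edges `v_{2i+1} v_{2j+1}` or `v_{2i} v_{2j}`. -/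

open SimpleGraph

variable {V : Type*}

/-- A graph is a threshold graph if for every two vertices `x, y`,
`N(x) ⊆ N[y]` or `N(y) ⊆ N[x]`. -/
def IsThresholdGraph {W : Type*} (H : SimpleGraph W) : Prop :=
  ∀ x y : W, H.neighborSet x ⊆ H.neighborSet y ∪ {y} ∨
    H.neighborSet y ⊆ H.neighborSet x ∪ {x}

namespace IsThresholdGraph

theorem adj_or_eq_of_adj_of_adj {W : Type*} {H : SimpleGraph W} (hH : IsThresholdGraph H)
    {w x y z : W} (hwx : H.Adj w x) (hyz : H.Adj y z) :
    H.Adj z x ∨ x = z ∨ H.Adj w y ∨ y = w := by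
  rcases hH w z with hwz | hzw
  · rcases hwz hwx with h | h
    · exact Or.inl h
    · exact Or.inr (Or.inl h)
  · rcases hzw hyz.symm with h | h
    · exact Or.inr (Or.inr (Or.inl h))
    · exact Or.inr (Or.inr (Or.inr h))

theorem induce_adj_or_eq_of_adj_of_adj {G : SimpleGraph V} {s : Set V}
    (hG : IsThresholdGraph (G.induce s)) {w x y z : V} (hw : w ∈ s) (hx : x ∈ s) (hy : y ∈ s)
    (hz : z ∈ s) (hwx : G.Adj w x) (hyz : G.Adj y z) :
    G.Adj z x ∨ x = z ∨ G.Adj w y ∨ y = w := by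
  simpa [Subtype.ext_iff] using
    hG.adj_or_eq_of_adj_of_adj (w := ⟨w, hw⟩) (x := ⟨x, hx⟩) (y := ⟨y, hy⟩) (z := ⟨z, hz⟩)
      hwx hyz

end IsThresholdGraph

section Paths

variable {G : SimpleGraph V} {u v : V} {p : G.Walk u v}

theorem SimpleGraph.Walk.IsPath.eq_add_one_of_toSubgraph_adj_getVert (hp : p.IsPath) {i j : ℕ}
    (hij : i < j) (hj : j ≤ p.length) (h : p.toSubgraph.Adj (p.getVert i) (p.getVert j)) :
    j = i + 1 := by
  obtain ⟨t, ht, htp⟩ := p.toSubgraph_adj_iff.mp h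
  have hinj {a b : ℕ} (ha : a ≤ p.length) (hb : b ≤ p.length) (hab : p.getVert a = p.getVert b) :
      a = b := hp.getVert_injOn ha hb hab
  rcases Sym2.eq_iff.mp ht with ⟨hti, htj⟩ | ⟨htj, hti⟩
  · have := hinj (by omega) hj htj
    have := hinj (by omega) (by omega) hti
    omega
  · have := hinj (by omega) (by omega) hti
    have := hinj (by omega) hj htj
    omega

theorem IsInducedPath.eq_add_one_of_adj_getVert (hp : IsInducedPath G p) {i j : ℕ}
    (hij : i < j) (hj : j ≤ p.length) (h : G.Adj (p.getVert i) (p.getVert j)) :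
    j = i + 1 :=
  hp.1.eq_add_one_of_toSubgraph_adj_getVert hij hj <|
    hp.2 _ (p.getVert_mem_support i) _ (p.getVert_mem_support j) h

end Paths

open Finset in
theorem Finset.exists_two_pairs_notMem {α : Type*} (X : Finset α) (f : ℕ → α) {m : ℕ}
    (hf : Set.InjOn f {t | t < 2 * m}) (hm : #X + 2 ≤ m) :
    ∃ i j, i < j ∧ j < m ∧ f (2 * i) ∉ X ∧ f (2 * i + 1) ∉ X ∧ f (2 * j) ∉ X ∧
      f (2 * j + 1) ∉ X := by
  classical
  set hit := (range (2 * m)).filter (f · ∈ X)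
  set bad := (range m).filter (fun j ↦ f (2 * j) ∈ X ∨ f (2 * j + 1) ∈ X)
  have hbad : #bad ≤ #X :=
    calc #bad ≤ #(hit.image (· / 2)) := by
          refine card_le_card fun j hj ↦ ?_
          simp only [bad, mem_filter, mem_range] at hj
          simp only [hit, mem_image, mem_filter, mem_range]
          rcases hj.2 with h | h
          · exact ⟨2 * j, ⟨by omega, h⟩, by omega⟩
          · exact ⟨2 * j + 1, ⟨by omega, h⟩, by omega⟩
      _ ≤ #hit := card_image_le
      _ ≤ #X := card_le_card_of_injOn f (fun t ht ↦ (mem_filter.mp ht).2)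
          (hf.mono fun t ht ↦ by simpa [hit] using (mem_filter.mp ht).1)
  set good := range m \ bad
  have hgood : 1 < #good := by
    have : m - #bad ≤ #good := card_range m ▸ le_card_sdiff bad (range m)
    omega
  have mem_good {j : ℕ} (hj : j ∈ good) : j < m ∧ f (2 * j) ∉ X ∧ f (2 * j + 1) ∉ X := by
    simp only [good, bad, mem_sdiff, mem_filter, mem_range] at hj
    tauto
  have hmin := mem_good (good.min'_mem (card_pos.mp (by omega)))
  have hmax := mem_good (good.max'_mem (card_pos.mp (by omega)))
  exact ⟨_, _, good.min'_lt_max'_of_card hgood, hmax.1, hmin.2.1, hmin.2.2, hmax.2.1, hmax.2.2⟩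

theorem induced_path_le_of_threshold_modulator_general {V : Type*} (G : SimpleGraph V)
    (X : Finset V) (k : ℕ) (hX : X.card = k)
    (hth : IsThresholdGraph (G.induce ((↑X : Set V)ᶜ)))
    {a b : V} (p : G.Walk a b) (hp : IsInducedPath G p) :
    p.length ≤ 2 * k + 2 := by
  by_contra! hlen
  have hinj : Set.InjOn p.getVert {t | t < 2 * (k + 2)} :=
    hp.1.getVert_injOn.mono fun t (ht : t < 2 * (k + 2)) ↦ show t ≤ p.length by omega
  obtain ⟨i, j, hij, hjk, hi, hi', hj, hj'⟩ := X.exists_two_pairs_notMem p.getVert hinj (by omega)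
  rcases hth.induce_adj_or_eq_of_adj_of_adj hi hi' hj hj'
      (p.adj_getVert_succ (by omega)) (p.adj_getVert_succ (by omega)) with h | h | h | h
  · have := hp.eq_add_one_of_adj_getVert (by omega) (by omega) h.symm
    omega
  · have := hp.1.getVert_injOn (show _ ≤ p.length by omega)
      (show _ ≤ p.length by omega) h
    omega
  · have := hp.eq_add_one_of_adj_getVert (by omega) (by omega) h
    omega
  · have := hp.1.getVert_injOn (show _ ≤ p.length by omega)
      (show _ ≤ p.length by omega) h
    omega

/-- If `X ⊆ V(G)` has size `k` and `G ∖ X` is a threshold graph, then every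
induced path in `G` has length at most `2k + 2` (at most `2k + 3` vertices). -/
theorem induced_path_le_of_threshold_modulator {V : Type*} [Fintype V] (G : SimpleGraph V)
    (X : Finset V) (k : ℕ) (hX : X.card = k)
    (hth : IsThresholdGraph (G.induce ((↑X : Set V)ᶜ)))
    {a b : V} (p : G.Walk a b) (hp : IsInducedPath G p) :
    p.length ≤ 2 * k + 2 :=
  induced_path_le_of_threshold_modulator_general G X k hX hth p hp
end

section
/- Let G be a finite simple graph and X ⊆ V(G) with |X| = k such that G ∖ X is a disjoint union of stars. Then every induced path in G has at most 4k + 3 vertices, i.e., length at most 4k + 2. -/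
open SimpleGraph

variable {V : Type*}

/-- A graph is a disjoint union of stars if every connected component has a vertex (a center)
adjacent to all other vertices of the component, with the remaining vertices of the component
pairwise non-adjacent. -/
def IsStarForest {W : Type*} (H : SimpleGraph W) : Prop :=
  ∀ K : H.ConnectedComponent, ∃ c ∈ K.supp,
    (∀ v ∈ K.supp, v ≠ c → H.Adj c v) ∧
    (∀ u ∈ K.supp, ∀ v ∈ K.supp, u ≠ c → v ≠ c → ¬ H.Adj u v)

/-
A star forest contains no path on four vertices, so among any four consecutive vertices of a
path in `G` one lies in `X`. The blocks of positions `[4j, 4j + 3]`, `j ≤ k`, are disjoint, so a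
path of length at least `4k + 3` would meet `X` in `k + 1` distinct vertices.
-/

open Finset

theorem IsStarForest.eq_or_eq_of_adj_adj_adj {W : Type*} {H : SimpleGraph W}
    (hH : IsStarForest H) {u v w x : W} (huv : H.Adj u v) (hvw : H.Adj v w) (hwx : H.Adj w x) :
    u = w ∨ v = x := by
  set K := H.connectedComponentMk v
  have hu : u ∈ K.supp := ConnectedComponent.connectedComponentMk_eq_of_adj huv
  have hv : v ∈ K.supp := rfl
  have hw : w ∈ K.supp := (ConnectedComponent.connectedComponentMk_eq_of_adj hvw).symm
  have hx : x ∈ K.supp := (ConnectedComponent.connectedComponentMk_eq_of_adj hwx).symm.trans hw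
  obtain ⟨c, -, -, hleaves⟩ := hH K
  by_cases hvc : v = c
  · subst hvc
    by_contra! h
    exact hleaves w hw x hx hvw.ne.symm h.2.symm hwx
  · have hwc : w = c := by
      by_contra hwc
      exact hleaves v hv w hw hvc hwc hvw
    subst hwc
    by_contra! h
    exact hleaves u hu v hv h.1 hvc huv

theorem exists_mem_of_adj_chain_of_isStarForest_induce_compl {V : Type*} {G : SimpleGraph V}
    {X : Set V} (hX : IsStarForest (G.induce Xᶜ)) {u v w x : V}
    (huv : G.Adj u v) (hvw : G.Adj v w) (hwx : G.Adj w x) (huw : u ≠ w) (hvx : v ≠ x) :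
    u ∈ X ∨ v ∈ X ∨ w ∈ X ∨ x ∈ X := by
  by_contra! h
  obtain ⟨hu, hv, hw, hx⟩ := h
  have := hX.eq_or_eq_of_adj_adj_adj (u := ⟨u, hu⟩) (v := ⟨v, hv⟩) (w := ⟨w, hw⟩)
    (x := ⟨x, hx⟩) huv hvw hwx
  simp_all

theorem lt_of_injOn_of_forall_window {V : Type*} {f : ℕ → V} {n r : ℕ} {X : Finset V}
    (hf : Set.InjOn f {i | i ≤ n})
    (hwindow : ∀ i, i + r ≤ n → ∃ m, i ≤ m ∧ m ≤ i + r ∧ f m ∈ X) :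
    n < (r + 1) * #X + r := by
  by_contra! hn
  have hblock : ∀ j, ∃ m, j ≤ #X → (r + 1) * j ≤ m ∧ m ≤ (r + 1) * j + r ∧ f m ∈ X := by
    intro j
    by_cases hj : j ≤ #X
    · obtain ⟨m, hm⟩ := hwindow ((r + 1) * j) (by nlinarith)
      exact ⟨m, fun _ => hm⟩
    · exact ⟨0, fun h => absurd h hj⟩
  choose idx hidx using hblock
  have hcard : #(range (#X + 1)) ≤ #X := by
    refine card_le_card_of_injOn (fun j => f (idx j)) ?_ ?_
    · intro j hj
      exact (hidx j (by simpa [Nat.lt_succ_iff] using hj)).2.2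
    · intro j hj j' hj' heq
      simp only [coe_range, Set.mem_Iio, Nat.lt_succ_iff] at hj hj'
      obtain ⟨h1, h2, -⟩ := hidx j hj
      obtain ⟨h1', h2', -⟩ := hidx j' hj'
      have : idx j = idx j' := hf (by simp only [Set.mem_ofPred_eq]; nlinarith) (by simp only [Set.mem_ofPred_eq]; nlinarith) heq
      nlinarith
  simp at hcard

theorem SimpleGraph.Walk.IsPath.exists_getVert_mem_of_isStarForest {V : Type*}
    {G : SimpleGraph V} {X : Set V} (hX : IsStarForest (G.induce Xᶜ)) {a b : V}
    {p : G.Walk a b} (hp : p.IsPath) {i : ℕ} (hi : i + 3 ≤ p.length) :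
    ∃ m, i ≤ m ∧ m ≤ i + 3 ∧ p.getVert m ∈ X := by
  have hne : ∀ j, j + 2 ≤ p.length → p.getVert j ≠ p.getVert (j + 2) := fun j hj h => by
    have := hp.getVert_injOn (by simp only [Set.mem_ofPred_eq]; omega) (by simp only [Set.mem_ofPred_eq]; omega) h
    omega
  rcases exists_mem_of_adj_chain_of_isStarForest_induce_compl hX
      (p.adj_getVert_succ (i := i) (by omega)) (p.adj_getVert_succ (i := i + 1) (by omega))
      (p.adj_getVert_succ (i := i + 2) (by omega)) (hne i (by omega)) (hne (i + 1) (by omega))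
    with h | h | h | h
  exacts [⟨i, le_rfl, by omega, h⟩, ⟨i + 1, by omega, by omega, h⟩,
    ⟨i + 2, by omega, by omega, h⟩, ⟨i + 3, by omega, le_rfl, h⟩]

theorem induced_path_le_of_star_modulator_general {V : Type*} (G : SimpleGraph V)
    (X : Finset V) (k : ℕ) (hX : X.card = k)
    (hstar : IsStarForest (G.induce ((↑X : Set V)ᶜ)))
    {a b : V} (p : G.Walk a b) (hp : IsInducedPath G p) :
    p.length ≤ 4 * k + 2 := by
  have := lt_of_injOn_of_forall_window hp.1.getVert_injOn
    fun _ hi => hp.1.exists_getVert_mem_of_isStarForest hstar hi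
  omega

/-- If `X ⊆ V(G)` has size `k` and `G ∖ X` is a disjoint union of stars, then
every induced path in `G` has length at most `4k + 2` (at most `4k + 3` vertices). -/
theorem induced_path_le_of_star_modulator {V : Type*} [Fintype V] (G : SimpleGraph V)
    (X : Finset V) (k : ℕ) (hX : X.card = k)
    (hstar : IsStarForest (G.induce ((↑X : Set V)ᶜ)))
    {a b : V} (p : G.Walk a b) (hp : IsInducedPath G p) :
    p.length ≤ 4 * k + 2 :=
  induced_path_le_of_star_modulator_general G X k hX hstar p hp
end

section
/- Let G be a finite simple graph, s a vertex of G, and X ⊆ V(G) with |X| = k such that G ∖ X is a disjoint union of stars. Then every optimal strategy for the firefighting process on (G, s) defends at most 4k + 2 vertices. -/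
open SimpleGraph

variable {V : Type*}

section aux

variable {G : SimpleGraph V} {s : V} {S : List V}

lemma burnt_le_succ (i : ℕ) : burnt G s S i ⊆ burnt G s S (i + 1) := by
  rw [burnt]; exact Set.subset_union_left

lemma burnt_mono_s9 {i j : ℕ} (h : i ≤ j) : burnt G s S i ⊆ burnt G s S j := by
  induction j, h using Nat.le_induction with
  | base => exact subset_rfl
  | succ n hn ih => exact ih.trans (burnt_le_succ n)

lemma burnt_take_eq {S' : List V} {n : ℕ} (h : S.take n = S'.take n) :
    ∀ i, i ≤ n → burnt G s S i = burnt G s S' i := by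
  intro i
  induction i with
  | zero => intro _; rfl
  | succ m ih =>
    intro hi
    have hm : S.take (m + 1) = S'.take (m + 1) := by
      have := congrArg (List.take (m + 1)) h
      simpa [List.take_take, Nat.min_eq_left hi] using this
    rw [burnt, burnt, ih (Nat.le_of_succ_le hi), hm]

lemma chain_exists (G : SimpleGraph V) (s : V) (S : List V) :
    ∀ i u, u ∈ burnt G s S (i + 1) → u ∉ burnt G s S i →
    ∃ f : ℕ → V, f 0 = s ∧ f (i + 1) = u ∧ (∀ j, j ≤ i → G.Adj (f j) (f (j + 1))) ∧
      (∀ j, j ≤ i + 1 → f j ∈ burnt G s S j) ∧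
      (∀ j, 1 ≤ j → j ≤ i + 1 → f j ∉ burnt G s S (j - 1)) := by
  intro i
  induction i with
  | zero =>
    intro u hu hu0
    rw [burnt] at hu
    rcases hu with h | h
    · exact absurd h hu0
    · obtain ⟨hnS, b, hb, hadj⟩ := h
      have hbs : b = s := hb
      refine ⟨fun j => if j = 0 then s else u, by simp, by simp, ?_, ?_, ?_⟩
      · intro j hj
        interval_cases j
        simpa using (hbs ▸ hadj).symm
      · intro j hj
        interval_cases j
        · exact rfl
        · show u ∈ burnt G s S 1
          rw [burnt]
          exact Or.inr ⟨hnS, b, hb, hadj⟩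
      · intro j h1 hj
        interval_cases j
        simpa using hu0
  | succ n ih =>
    intro u hu hu1
    have hu' := hu
    rw [burnt] at hu
    rcases hu with h | h
    · exact absurd h hu1
    · obtain ⟨hnotS, b, hb, hadj⟩ := h
      have hbn : b ∉ burnt G s S n := by
        intro hbmem
        apply hu1
        rw [burnt]
        right
        refine ⟨?_, b, hbmem, hadj⟩
        intro hmem
        apply hnotS
        have : S.take (n + 1) = (S.take (n + 2)).take (n + 1) := by
          rw [List.take_take]; congr 1; omega
        rw [this] at hmem
        exact List.take_subset _ _ hmem
      obtain ⟨f, hf0, hfl, hfadj, hfmem, hfnot⟩ := ih b hb hbn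
      refine ⟨fun j => if j = n + 2 then u else f j, ?_, by simp, ?_, ?_, ?_⟩
      · simp [hf0]
      · intro j hj
        rcases Nat.lt_or_ge j (n + 1) with h' | h'
        · have e1 : j ≠ n + 2 := by omega
          have e2 : j + 1 ≠ n + 2 := by omega
          simp only [e1, e2, if_false]
          exact hfadj j (by omega)
        · have e : j = n + 1 := by omega
          subst e
          have e1 : n + 1 ≠ n + 2 := by omega
          simp only [e1, if_false, if_pos rfl]
          exact hfl ▸ hadj.symm
      · intro j hj
        rcases eq_or_ne j (n + 2) with e | e
        · subst e; simpa using hu'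
        · simp only [e, if_false]
          exact hfmem j (by omega)
      · intro j h1 hj
        rcases eq_or_ne j (n + 2) with e | e
        · subst e; simpa using hu1
        · simp only [e, if_false]
          exact hfnot j h1 (by omega)

lemma burnt_stab [Fintype V] (G : SimpleGraph V) (s : V) (X : Finset V) (k : ℕ)
    (hX : X.card = k) (hstar : IsStarForest (G.induce ((↑X : Set V)ᶜ)))
    (S : List V) {i : ℕ} (hi : 4 * k + 2 ≤ i) :
    burnt G s S (i + 1) = burnt G s S i := by
  by_contra hne
  have hex : ∃ u, u ∈ burnt G s S (i + 1) ∧ u ∉ burnt G s S i := by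
    by_contra hc
    push_neg at hc
    exact hne (le_antisymm (fun u hu => hc u hu) (burnt_le_succ i))
  obtain ⟨u, hu, hu'⟩ := hex
  obtain ⟨f, hf0, hfl, hfadj, hfmem, hfnot⟩ := chain_exists G s S i u hu hu'
  -- injectivity of f on [0, i+1]
  have hinj : ∀ a b, a < b → b ≤ i + 1 → f a ≠ f b := by
    intro a b hab hb heq
    have h1 : f a ∈ burnt G s S (b - 1) :=
      burnt_mono_s9 (by omega) (hfmem a (by omega))
    have h2 : f b ∉ burnt G s S (b - 1) := hfnot b (by omega) hb
    exact h2 (heq ▸ h1)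
  -- each block of 4 consecutive vertices hits X
  have hblock : ∀ j, j + 3 ≤ i + 1 → ∃ m, j ≤ m ∧ m ≤ j + 3 ∧ f m ∈ X := by
    intro j hj
    by_contra hc
    push_neg at hc
    have hmem : ∀ m, j ≤ m → m ≤ j + 3 → f m ∈ ((↑X : Set V)ᶜ) := by
      intro m h1 h2
      exact fun hx => hc m h1 h2 hx
    set H := G.induce ((↑X : Set V)ᶜ) with hH
    let v0 : ↥((↑X : Set V)ᶜ) := ⟨f j, hmem j le_rfl (by omega)⟩
    let v1 : ↥((↑X : Set V)ᶜ) := ⟨f (j + 1), hmem (j + 1) (by omega) (by omega)⟩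
    let v2 : ↥((↑X : Set V)ᶜ) := ⟨f (j + 2), hmem (j + 2) (by omega) (by omega)⟩
    let v3 : ↥((↑X : Set V)ᶜ) := ⟨f (j + 3), hmem (j + 3) (by omega) (by omega)⟩
    have ha01 : H.Adj v0 v1 := by
      show G.Adj (f j) (f (j + 1)); exact hfadj j (by omega)
    have ha12 : H.Adj v1 v2 := by
      show G.Adj (f (j + 1)) (f (j + 2)); exact hfadj (j + 1) (by omega)
    have ha23 : H.Adj v2 v3 := by
      show G.Adj (f (j + 2)) (f (j + 3)); exact hfadj (j + 2) (by omega)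
    set K := H.connectedComponentMk v0 with hK
    have m0 : v0 ∈ K.supp := by rw [ConnectedComponent.mem_supp_iff]
    have m1 : v1 ∈ K.supp := by
      rw [ConnectedComponent.mem_supp_iff, hK, ConnectedComponent.eq]
      exact ha01.reachable.symm
    have m2 : v2 ∈ K.supp := by
      rw [ConnectedComponent.mem_supp_iff, hK, ConnectedComponent.eq]
      exact (ha01.reachable.trans ha12.reachable).symm
    have m3 : v3 ∈ K.supp := by
      rw [ConnectedComponent.mem_supp_iff, hK, ConnectedComponent.eq]
      exact ((ha01.reachable.trans ha12.reachable).trans ha23.reachable).symm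
    obtain ⟨c, hc0, _, hcnon⟩ := hstar K
    have hc01 : v0 = c ∨ v1 = c := by
      by_contra hcc
      push_neg at hcc
      exact hcnon v0 m0 v1 m1 hcc.1 hcc.2 ha01
    have hc23 : v2 = c ∨ v3 = c := by
      by_contra hcc
      push_neg at hcc
      exact hcnon v2 m2 v3 m3 hcc.1 hcc.2 ha23
    rcases hc01 with e1 | e1 <;> rcases hc23 with e2 | e2
    · exact hinj j (j + 2) (by omega) (by omega) (congrArg Subtype.val (e1.trans e2.symm))
    · exact hinj j (j + 3) (by omega) (by omega) (congrArg Subtype.val (e1.trans e2.symm))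
    · exact hinj (j + 1) (j + 2) (by omega) (by omega) (congrArg Subtype.val (e1.trans e2.symm))
    · exact hinj (j + 1) (j + 3) (by omega) (by omega) (congrArg Subtype.val (e1.trans e2.symm))
  -- pigeonhole
  have hmap : ∀ r : Fin (k + 1), ∃ m, 4 * (r : ℕ) ≤ m ∧ m ≤ 4 * (r : ℕ) + 3 ∧ f m ∈ X := by
    intro r
    exact hblock (4 * (r : ℕ)) (by have := r.2; omega)
  choose m hm1 hm2 hm3 using hmap
  have hginj : Function.Injective (fun r : Fin (k + 1) => (⟨f (m r), hm3 r⟩ : X)) := by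
    intro r r' heq
    by_contra hrr
    have hne2 : (r : ℕ) ≠ (r' : ℕ) := fun h => hrr (Fin.ext h)
    have hval : f (m r) = f (m r') := congrArg Subtype.val heq
    rcases Nat.lt_or_ge (r : ℕ) (r' : ℕ) with h' | h'
    · have : m r < m r' := by have := hm2 r; have := hm1 r'; omega
      exact hinj (m r) (m r') this (by have := hm2 r'; have := r'.2; omega) hval
    · have hlt : (r' : ℕ) < (r : ℕ) := by omega
      have : m r' < m r := by have := hm2 r'; have := hm1 r; omega
      exact hinj (m r') (m r) this (by have := hm2 r; have := r.2; omega) hval.symm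
  have := Fintype.card_le_of_injective _ hginj
  simp [Fintype.card_coe, hX] at this

lemma burnt_const [Fintype V] (G : SimpleGraph V) (s : V) (X : Finset V) (k : ℕ)
    (hX : X.card = k) (hstar : IsStarForest (G.induce ((↑X : Set V)ᶜ)))
    (S : List V) {j : ℕ} (hj : 4 * k + 2 ≤ j) :
    burnt G s S j = burnt G s S (4 * k + 2) := by
  induction j, hj using Nat.le_induction with
  | base => rfl
  | succ n hn ih => rw [burnt_stab G s X k hX hstar S hn, ih]

lemma BurntSet_eq [Fintype V] (G : SimpleGraph V) (s : V) (X : Finset V) (k : ℕ)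
    (hX : X.card = k) (hstar : IsStarForest (G.induce ((↑X : Set V)ᶜ)))
    (S : List V) : BurntSet G s S = burnt G s S (4 * k + 2) := by
  ext u
  simp only [BurntSet, Set.mem_iUnion]
  constructor
  · rintro ⟨i, hi⟩
    rcases le_total i (4 * k + 2) with h | h
    · exact burnt_mono_s9 h hi
    · rw [← burnt_const G s X k hX hstar S h]; exact hi
  · intro h; exact ⟨4 * k + 2, h⟩

end aux

/-- If `X ⊆ V(G)` has size `k` and `G ∖ X` is a disjoint union of stars, then
every optimal strategy for the firefighting process on `(G, s)` defends at most `4k + 2`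
vertices. -/
theorem optimal_strategy_le_of_star_modulator {V : Type*} [Fintype V] (G : SimpleGraph V)
    (s : V) (X : Finset V) (k : ℕ) (hX : X.card = k)
    (hstar : IsStarForest (G.induce ((↑X : Set V)ᶜ)))
    (S : List V) (hS : OptimalStrategy G s S) :
    S.length ≤ 4 * k + 2 := by
  by_contra hlen
  push_neg at hlen
  set N := 4 * k + 2 with hN
  set S' := S.take N with hS'
  have htake : S'.take N = S.take N := by
    rw [hS', List.take_take, Nat.min_self]
  have hbeq : ∀ i, i ≤ N → burnt G s S' i = burnt G s S i :=
    burnt_take_eq htake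
  have hlen' : S'.length = N := by
    rw [hS', List.length_take]; omega
  have hvalid : ValidStrategy G s S' := by
    obtain ⟨hnd, hv⟩ := hS.1.1
    constructor
    · exact (List.take_sublist N S).nodup hnd
    · intro i h
      have hiN : i < N := by rwa [hlen'] at h
      have hiS : i < S.length := by omega
      have hget : S'.get ⟨i, h⟩ = S.get ⟨i, hiS⟩ := by
        simp [hS', List.getElem_take]
      rw [hget, hbeq i (by omega)]
      exact hv i hiS
  have hne : S' ≠ S := by
    intro h
    have := congrArg List.length h
    rw [hlen'] at this
    omega
  have hsav : sav G s S' = sav G s S := by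
    unfold sav
    rw [BurntSet_eq G s X k hX hstar S', BurntSet_eq G s X k hX hstar S,
      hbeq N le_rfl]
  have := hS.1.2 S' (List.take_sublist N S) hne hvalid
  omega
end

section
/- Let G be a finite simple graph, X ⊆ V(G) with |X| = l and s ∈ X, and suppose C = V(G) ∖ X is a clique in G. Let X_L = {x ∈ X : |N(x) ∩ C| ≤ l + 1} and J = {y ∈ C : y has a neighbor in X_L}. Let S be a minimal valid strategy for the firefighting process on (G, s) defending at most l + 1 vertices and containing a vertex v ∈ C ∖ J. Then every vertex of N(v) ∖ S is burned by S. -/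
open SimpleGraph

variable {V : Type*}

private lemma burnt_mono_aux (G : SimpleGraph V) (s : V) (S : List V) :
    ∀ {i j : ℕ}, i ≤ j → burnt G s S i ⊆ burnt G s S j := by
  intro i j h
  induction j with
  | zero =>
    have : i = 0 := by omega
    subst this; exact fun x hx => hx
  | succ j ih =>
    rcases Nat.lt_or_ge i (j + 1) with h' | h'
    · exact fun x hx => Or.inl (ih (by omega) hx)
    · have : i = j + 1 := by omega
      subst this; exact fun x hx => hx

/-- Let `X` of size `l` contain `s`, with `C = V(G) ∖ X` a clique. Let
`X_L = {x ∈ X : |N(x) ∩ C| ≤ l + 1}` and `J = {y ∈ C : y has a neighbor in X_L}`. If `S` is a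
minimal valid strategy defending at most `l + 1` vertices and containing a vertex
`v ∈ C ∖ J`, then every vertex of `N(v) ∖ S` is burned by `S`. -/
theorem neighbors_burned_of_defended_in_clique {V : Type*} [Fintype V] (G : SimpleGraph V)
    (X : Finset V) (l : ℕ) (hX : X.card = l) (s : V) (hs : s ∈ X)
    (hclique : ∀ u ∉ X, ∀ v ∉ X, u ≠ v → G.Adj u v)
    (S : List V) (hS : MinimalStrategy G s S) (hlen : S.length ≤ l + 1)
    (v : V) (hvS : v ∈ S) (hvX : v ∉ X)
    (hvJ : ¬ ∃ x ∈ X, (G.neighborSet x ∩ (↑X : Set V)ᶜ).ncard ≤ l + 1 ∧ G.Adj v x) :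
    ∀ u ∈ G.neighborSet v, u ∉ S → u ∈ BurntSet G s S := by
  classical
  intro u hu huS
  by_contra hub
  obtain ⟨⟨hnd, hvalid⟩, hmin⟩ := hS
  have hScard : S.toFinset.card ≤ l + 1 := le_trans (List.toFinset_card_le S) hlen
  have hpick : ∀ T : Set V, ¬ T.ncard ≤ l + 1 → ∃ c ∈ T, c ∉ S := by
    intro T hT
    by_contra h
    push_neg at h
    apply hT
    calc T.ncard ≤ (↑S.toFinset : Set V).ncard :=
          Set.ncard_le_ncard (fun x hx => by simpa using h x hx) (Set.toFinite _)
      _ = S.toFinset.card := Set.ncard_coe_finset _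
      _ ≤ l + 1 := hScard
  push_neg at hvJ
  have hbig : ∀ x ∈ X, G.Adj v x → ∃ c, G.Adj x c ∧ c ∉ X ∧ c ∉ S := by
    intro x hx hadj
    have h2 : ¬ (G.neighborSet x ∩ (↑X : Set V)ᶜ).ncard ≤ l + 1 :=
      fun h => (hvJ x hx h) hadj
    obtain ⟨c, hc, hcS⟩ := hpick _ h2
    exact ⟨c, hc.1, hc.2, hcS⟩
  have hstep : ∀ (j : ℕ) (a b : V), b ∈ burnt G s S j → G.Adj a b → a ∉ S →
      a ∈ burnt G s S (j + 1) := by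
    intro j a b hb hab haS
    exact Or.inr ⟨fun h => haS (List.take_subset _ _ h), b, hb, hab⟩
  have hBu : ∀ j, u ∉ burnt G s S j := fun j hj => hub (Set.mem_iUnion.2 ⟨j, hj⟩)
  -- (A) : no vertex outside X ever burns
  have hA : ∀ c ∉ X, ∀ j, c ∉ burnt G s S j := by
    intro c hcX j hc
    by_cases huX : u ∈ X
    · obtain ⟨c', hc'adj, hc'X, hc'S⟩ := hbig u huX hu
      rcases eq_or_ne c' c with rfl | hne
      · exact hBu (j + 1) (hstep j u c' hc hc'adj huS)
      · have h1 : c' ∈ burnt G s S (j + 1) :=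
          hstep j c' c hc (hclique c' hc'X c hcX hne) hc'S
        exact hBu (j + 2) (hstep (j + 1) u c' h1 hc'adj huS)
    · rcases eq_or_ne u c with rfl | hne
      · exact hBu j hc
      · exact hBu (j + 1) (hstep j u c hc (hclique u huX c hcX hne) huS)
  -- (B) : no neighbor of v ever burns
  have hB : ∀ b, G.Adj v b → ∀ j, b ∉ burnt G s S j := by
    intro b hvb j hb
    by_cases hbX : b ∈ X
    · obtain ⟨c, hcadj, hcX, hcS⟩ := hbig b hbX hvb
      exact hA c hcX (j + 1) (hstep j c b hb hcadj.symm hcS)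
    · exact hA b hbX j hb
  -- decompose S around v
  obtain ⟨S₁, S₂, rfl⟩ := List.append_of_mem hvS
  have hsub : (S₁ ++ S₂).Sublist (S₁ ++ v :: S₂) :=
    List.Sublist.append_left (List.sublist_cons_self v S₂) S₁
  have htake : ∀ (m : ℕ) (x : V), x ∈ (S₁ ++ v :: S₂).take m → x ≠ v →
      x ∈ (S₁ ++ S₂).take m := by
    intro m x hx hxv
    rw [List.take_append] at hx ⊢
    rcases List.mem_append.1 hx with h | h
    · exact List.mem_append.2 (Or.inl h)
    · refine List.mem_append.2 (Or.inr ?_)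
      rcases e : m - S₁.length with _ | n
      · rw [e] at h; simp at h
      · rw [e, List.take_succ_cons] at h
        rcases List.mem_cons.1 h with rfl | h
        · exact absurd rfl hxv
        · have hsub2 : S₂.take n ⊆ S₂.take (n + 1) := by
            have he2 : S₂.take n = (S₂.take (n + 1)).take n := by
              rw [List.take_take]; congr 1; omega
            rw [he2]; exact List.take_subset _ _
          exact hsub2 h
  -- (C) : burning with S' is contained in burning with S
  have hC : ∀ i, burnt G s (S₁ ++ S₂) i ⊆ burnt G s (S₁ ++ v :: S₂) i := by
    intro i
    induction i with
    | zero => exact fun x hx => hx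
    | succ i ih =>
      intro w hw
      rcases hw with hw | ⟨hnt, b, hb, hadj⟩
      · exact Or.inl (ih hw)
      · rcases eq_or_ne w v with rfl | hne
        · exact absurd (ih hb) (hB b hadj i)
        · exact Or.inr ⟨fun h => hnt (htake _ w h hne), b, ih hb, hadj⟩
  -- S' is a valid strategy
  have hvalid' : ValidStrategy G s (S₁ ++ S₂) := by
    refine ⟨hnd.sublist hsub, ?_⟩
    intro i h hmem
    have hmem' := hC i hmem
    rcases Nat.lt_or_ge i S₁.length with hi | hi
    · have hiS : i < (S₁ ++ v :: S₂).length := by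
        simp only [List.length_append, List.length_cons]; omega
      refine hvalid i hiS ?_
      have he : (S₁ ++ v :: S₂).get ⟨i, hiS⟩ = (S₁ ++ S₂).get ⟨i, h⟩ := by
        simp only [List.get_eq_getElem]
        rw [List.getElem_append_left hi, List.getElem_append_left hi]
      rw [he]; exact hmem'
    · have h' : i < S₁.length + S₂.length := by
        have h2 := h; simp only [List.length_append] at h2; exact h2
      have hiS : i + 1 < (S₁ ++ v :: S₂).length := by
        simp only [List.length_append, List.length_cons]; omega
      refine hvalid (i + 1) hiS ?_
      have he : (S₁ ++ v :: S₂).get ⟨i + 1, hiS⟩ = (S₁ ++ S₂).get ⟨i, h⟩ := by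
        simp only [List.get_eq_getElem]
        rw [List.getElem_append_right (by omega : S₁.length ≤ i + 1),
          List.getElem_append_right hi]
        simp only [show i + 1 - S₁.length = (i - S₁.length) + 1 by omega,
          List.getElem_cons_succ]
      rw [he]
      exact burnt_mono_aux G s _ (Nat.le_succ i) hmem'
  have hne : S₁ ++ S₂ ≠ S₁ ++ v :: S₂ := by
    intro h
    have := congrArg List.length h
    simp only [List.length_append, List.length_cons] at this
    omega
  have hlt := hmin (S₁ ++ S₂) hsub hne hvalid'
  have hle : sav G s (S₁ ++ v :: S₂) ≤ sav G s (S₁ ++ S₂) := by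
    apply Set.ncard_le_ncard _ (Set.toFinite _)
    intro x hx hx'
    apply hx
    simp only [BurntSet, Set.mem_iUnion] at hx' ⊢
    obtain ⟨i, hi⟩ := hx'
    exact ⟨i, hC i hi⟩
  omega
end

section
/- Let G be a finite simple graph, X ⊆ V(G) with |X| = l and s ∈ X, and suppose C = V(G) ∖ X is a clique in G. Let S be a valid strategy for the firefighting process on (G, s) defending at most l + 1 vertices. If S saves at least 2l + 1 vertices, then no vertex of C is burned by S. -/
open SimpleGraph

variable {V : Type*}

/-- Let `X` of size `l` contain `s`, with `C = V(G) ∖ X` a clique in `G`. If a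
valid strategy `S` defending at most `l + 1` vertices saves at least `2l + 1` vertices, then no
vertex of `C` is burned by `S`. -/
theorem clique_not_burned_of_many_saved {V : Type*} [Fintype V] (G : SimpleGraph V)
    (X : Finset V) (l : ℕ) (hX : X.card = l) (s : V) (hs : s ∈ X)
    (hclique : ∀ u ∉ X, ∀ v ∉ X, u ≠ v → G.Adj u v)
    (S : List V) (hS : ValidStrategy G s S) (hlen : S.length ≤ l + 1)
    (hsav : 2 * l + 1 ≤ sav G s S) :
    ∀ v, v ∉ X → v ∉ BurntSet G s S := by
  classical
  by_contra h
  push_neg at h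
  obtain ⟨v, hvX, hvB⟩ := h
  obtain ⟨Bi, ⟨i, rfl⟩, hvi⟩ := hvB
  have hl1 : 1 ≤ l := hX ▸ Finset.card_pos.mpr ⟨s, hs⟩
  have hsub : (BurntSet G s S)ᶜ ⊆ ↑(X.erase s ∪ S.toFinset) := by
    intro u hu
    simp only [Finset.coe_union, Set.mem_union, Finset.coe_erase, Set.mem_diff,
      Finset.mem_coe, List.coe_toFinset, Set.mem_setOf_eq, Set.mem_singleton_iff]
    by_cases huS : u ∈ S
    · right; exact huS
    · left
      constructor
      · by_contra huX
        apply hu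
        by_cases huv : u = v
        · exact ⟨burnt G s S i, ⟨i, rfl⟩, huv ▸ hvi⟩
        · refine ⟨burnt G s S (i + 1), ⟨i + 1, rfl⟩, Or.inr ?_⟩
          exact ⟨fun hmem => huS (List.mem_of_mem_take hmem),
            v, hvi, hclique u huX v hvX huv⟩
      · intro hus
        exact hu ⟨burnt G s S 0, ⟨0, rfl⟩, hus⟩
  have h1 : sav G s S ≤ (X.erase s ∪ S.toFinset).card := by
    rw [sav, ← Set.ncard_coe_finset]
    exact Set.ncard_le_ncard hsub (Finset.finite_toSet _)
  have h2 : (X.erase s ∪ S.toFinset).card ≤ (l - 1) + (l + 1) := by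
    refine le_trans (Finset.card_union_le _ _) (Nat.add_le_add ?_ ?_)
    · rw [Finset.card_erase_of_mem hs, hX]
    · exact le_trans (List.toFinset_card_le S) hlen
  omega
end

section
/- Let G be a finite simple graph, X ⊆ V(G), and s ∈ X such that G ∖ X is a disjoint union of stars. Let X = X_d ∪ X_s ∪ X_b be a partition, and let S be a valid strategy for the firefighting process on (G, s) with S ∩ X = X_d such that every vertex of X_b is burned by S and every vertex of X_s is saved by S. Let 𝕊 be a connected component (star) of G ∖ X that contains a vertex p with a neighbor in X_b and a vertex q with a neighbor in X_s. Then S must contain at least one vertex of 𝕊; that is, no such component 𝕊 can be disjoint from S. -/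
open SimpleGraph

variable {V : Type*}

private lemma spread_burn {V : Type*} (G : SimpleGraph V) (s : V) (S : List V) {u v : V}
    (hu : u ∈ BurntSet G s S) (hv : v ∉ S) (hadj : G.Adj v u) : v ∈ BurntSet G s S := by
  obtain ⟨i, hi⟩ := Set.mem_iUnion.1 hu
  exact Set.mem_iUnion.2 ⟨i + 1, Or.inr ⟨fun h => hv (List.mem_of_mem_take h), u, hi, hadj⟩⟩

private lemma walk_burn {V : Type*} (G : SimpleGraph V) (X : Set V) (s : V) (S : List V)
    {a b : (Xᶜ : Set V)} (w : (G.induce (Xᶜ : Set V)).Walk a b)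
    (hw : ∀ x ∈ w.support, (↑x : V) ∉ S) (ha : (↑a : V) ∈ BurntSet G s S) :
    (↑b : V) ∈ BurntSet G s S := by
  induction w with
  | nil => exact ha
  | cons h p ih =>
    rename_i x y z
    refine ih (fun v hv => hw v (List.mem_cons_of_mem _ hv)) ?_
    have hy : (↑y : V) ∉ S := hw y (by simp [SimpleGraph.Walk.support_cons])
    exact spread_burn G s S ha hy ((SimpleGraph.comap_adj.1 h).symm)

/-- Let `s ∈ X` with `G ∖ X` a disjoint union of stars, and let
`X = X_d ∪ X_s ∪ X_b` be a partition. Suppose `S` is a valid strategy with `S ∩ X = X_d`,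
burning every vertex of `X_b` and saving every vertex of `X_s`. Then no connected component
(star) of `G ∖ X` that is disjoint from `S` can contain both a vertex with a neighbor in `X_b`
and a vertex with a neighbor in `X_s`. -/
theorem vulnerable_star_must_be_defended {V : Type*} [Fintype V] [DecidableEq V] (G : SimpleGraph V)
    (X : Finset V) (s : V) (hs : s ∈ X)
    (hstar : IsStarForest (G.induce ((↑X : Set V)ᶜ)))
    (Xd Xs Xb : Finset V)
    (hunion : Xd ∪ Xs ∪ Xb = X)
    (hd1 : Disjoint Xd Xs) (hd2 : Disjoint Xd Xb) (hd3 : Disjoint Xs Xb)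
    (S : List V) (hS : ValidStrategy G s S)
    (hSX : (↑X ∩ {x | x ∈ S} : Set V) = ↑Xd)
    (hburn : ∀ x ∈ Xb, x ∈ BurntSet G s S)
    (hsave : ∀ x ∈ Xs, x ∉ BurntSet G s S)
    (K : (G.induce ((↑X : Set V)ᶜ)).ConnectedComponent)
    (hKS : ∀ v ∈ K.supp, (↑v : V) ∉ S)
    (hp : ∃ p ∈ K.supp, ∃ x ∈ Xb, G.Adj (↑p) x)
    (hq : ∃ q ∈ K.supp, ∃ x ∈ Xs, G.Adj (↑q) x) :
    False := by
  classical
  obtain ⟨p, hpK, xb, hxb, hadjp⟩ := hp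
  obtain ⟨q, hqK, xs, hxs, hadjq⟩ := hq
  -- p is burnt
  have hpS : (↑p : V) ∉ S := hKS p hpK
  have hpburn : (↑p : V) ∈ BurntSet G s S :=
    spread_burn G s S (hburn xb hxb) hpS hadjp
  -- walk from p to q within the component
  have hpK' := (SimpleGraph.ConnectedComponent.mem_supp_iff K p).1 hpK
  have hqK' := (SimpleGraph.ConnectedComponent.mem_supp_iff K q).1 hqK
  have hreach : (G.induce ((↑X : Set V)ᶜ)).Reachable p q :=
    SimpleGraph.ConnectedComponent.eq.1 (hpK'.trans hqK'.symm)
  obtain ⟨w⟩ := hreach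
  have hqburn : (↑q : V) ∈ BurntSet G s S := by
    refine walk_burn G (↑X : Set V) s S w (fun x hx => ?_) hpburn
    -- x is in the same component K
    have hxK : x ∈ K.supp := by
      have hxp : (G.induce ((↑X : Set V)ᶜ)).Reachable p x := by
        obtain ⟨w1, _, _⟩ := SimpleGraph.Walk.mem_support_iff_exists_append.1 hx
        exact ⟨w1⟩
      have hxp' : (G.induce ((↑X : Set V)ᶜ)).connectedComponentMk x =
          (G.induce ((↑X : Set V)ᶜ)).connectedComponentMk p :=
        SimpleGraph.ConnectedComponent.eq.2 hxp.symm
      exact (SimpleGraph.ConnectedComponent.mem_supp_iff K x).2 (hxp'.trans hpK')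
    exact hKS x hxK
  -- xs is not defended
  have hxsS : xs ∉ S := by
    intro hmem
    have hxsX : xs ∈ X := by
      rw [← hunion]; exact Finset.mem_union_left _ (Finset.mem_union_right _ hxs)
    have : xs ∈ (↑Xd : Set V) := by
      rw [← hSX]; exact ⟨hxsX, hmem⟩
    exact (Finset.disjoint_left.1 hd1) this hxs
  exact hsave xs hxs (spread_burn G s S hqburn hxsS hadjq.symm)
end

section
/- Let G be a finite simple graph and k ≥ 2 an integer with |E(G)| > k(k−1)/2. Construct the graph H with vertex set {s} ∪ D ∪ V(G) ∪ J, where D = {d_{i,j} : 1 ≤ i ≤ k−1, 1 ≤ j ≤ k} and J = {J_{uv} : uv ∈ E(G)}, and with edges: all edges of G; u J_{uv} and v J_{uv} for every edge uv ∈ E(G); s d_{1,j} for every j; d_{i,j} d_{i+1,j′} for all 1 ≤ i ≤ k−2 and all j, j′; and d_{k−1,j} w for every j and every w ∈ V(G). Then there exists a valid strategy for the firefighting process on (H, s) saving at least k + k(k−1)/2 + 1 vertices if and only if G contains a clique on k vertices. -/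
/-!
The fire needs `i + 1` steps to reach level `i` of the grid `D`, and since fewer than `k` vertices
are defended by then, it does reach that level. So every vertex of `G` not defended during the
first `k` moves burns at time `k`, and every `J_{uv}` with such an end burns at time `k + 1`
unless it is defended during the first `k + 1` moves. A strategy therefore saves at most the `k + 1`
vertices it defends first and the `J_{uv}` spanned by the at most `k` vertices of `G` defended
first; the latter number fewer than `k(k-1)/2` unless these vertices form a `k`-clique.
Conversely, defending a `k`-clique `K` and then some `J_e` with `e ⊄ K` (which exists because
`|E(G)| > k(k-1)/2`) saves `K`, `J_e` and the `k(k-1)/2` vertices `J_{uv}` with `u, v ∈ K`.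
-/

open SimpleGraph

variable {V : Type*}

/-- The vertex set of the graph `H` built from `G` and `k`: a source `s` (first summand),
the grid `D = {d_{i,j} : 1 ≤ i ≤ k-1, 1 ≤ j ≤ k}`, the vertices of `G`, and a vertex
`J_{uv}` for each edge `uv` of `G`. -/
abbrev FFVerts' (V : Type*) (G : SimpleGraph V) (k : ℕ) : Type _ :=
  Unit ⊕ (Fin (k - 1) × Fin k) ⊕ V ⊕ {e : Sym2 V // e ∈ G.edgeSet}

/-- The base (asymmetric) edge relation of `H`: all edges of `G`; `u J_{uv}` and `v J_{uv}`
for every edge `uv` of `G`; `s d_{1,j}`; `d_{i,j} d_{i+1,j'}`; and `d_{k-1,j} w` for every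
vertex `w` of `G`.  (Indices of `D` are 0-indexed, so `d_{1,j}` is level `0` and `d_{k-1,j}`
is level `k - 2`.) -/
def ffRel' (V : Type*) (G : SimpleGraph V) (k : ℕ) :
    FFVerts' V G k → FFVerts' V G k → Prop := fun a b =>
  match a, b with
  | Sum.inl _, Sum.inr (Sum.inl d) => (d.1 : ℕ) = 0
  | Sum.inr (Sum.inl d), Sum.inr (Sum.inl d') => (d'.1 : ℕ) = (d.1 : ℕ) + 1
  | Sum.inr (Sum.inl d), Sum.inr (Sum.inr (Sum.inl _)) => (d.1 : ℕ) = k - 2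
  | Sum.inr (Sum.inr (Sum.inl u)), Sum.inr (Sum.inr (Sum.inl v)) => G.Adj u v
  | Sum.inr (Sum.inr (Sum.inl v)), Sum.inr (Sum.inr (Sum.inr e)) => v ∈ (e : Sym2 V)
  | _, _ => False

/-- The graph `H` of the reduction of STATEMENT 18. -/
def FFGraph' (V : Type*) (G : SimpleGraph V) (k : ℕ) : SimpleGraph (FFVerts' V G k) :=
  SimpleGraph.fromRel (ffRel' V G k)

section Firefighting

variable {G : SimpleGraph V} {s : V} {S : List V}

lemma start_mem_burnt (i : ℕ) : s ∈ burnt G s S i :=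
  burnt_mono (Nat.zero_le i) rfl

lemma mem_burnt_succ {i : ℕ} {u b : V} (hb : b ∈ burnt G s S i) (hub : G.Adj u b)
    (hu : u ∉ S.take (i + 1)) : u ∈ burnt G s S (i + 1) :=
  Or.inr ⟨hu, b, hb, hub⟩

lemma mem_burntSet {x : V} : x ∈ BurntSet G s S ↔ ∃ i, x ∈ burnt G s S i :=
  Set.mem_iUnion

lemma le_of_mem_burnt {f : V → ℕ} (hs : f s = 0) (hf : ∀ u b, G.Adj u b → f u ≤ f b + 1)
    {i : ℕ} {x : V} (hx : x ∈ burnt G s S i) : f x ≤ i := by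
  induction i generalizing x with
  | zero => rw [show x = s from hx, hs]
  | succ i ih =>
    rcases hx with hx | ⟨-, b, hb, hxb⟩
    · exact (ih hx).trans i.le_succ
    · exact (hf x b hxb).trans (Nat.succ_le_succ (ih hb))

lemma validStrategy_of_lt {f : V → ℕ} (hs : f s = 0)
    (hf : ∀ u b, G.Adj u b → f u ≤ f b + 1) (hnd : S.Nodup)
    (hS : ∀ i (h : i < S.length), i < f (S.get ⟨i, h⟩)) :
    ValidStrategy G s S :=
  ⟨hnd, fun i h hx => (hS i h).not_ge (le_of_mem_burnt hs hf hx)⟩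

lemma mem_burnt_of_mem_take {i j : ℕ} {x : V} (hx : x ∈ S.take (i + 1))
    (hj : x ∈ burnt G s S j) : x ∈ burnt G s S i := by
  induction j with
  | zero => rw [show x = s from hj]; exact start_mem_burnt i
  | succ j ih =>
    by_cases hji : j + 1 ≤ i
    · exact burnt_mono hji hj
    rcases hj with hj | ⟨hxj, -⟩
    · exact ih hj
    · exact absurd (S.take_subset_take_left (by omega) hx) hxj

lemma ValidStrategy.notMem_burntSet (hS : ValidStrategy G s S) {x : V} (hx : x ∈ S) :
    x ∉ BurntSet G s S := by
  obtain ⟨i, hi, rfl⟩ := List.getElem_of_mem hx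
  rintro hburnt
  obtain ⟨j, hj⟩ := mem_burntSet.1 hburnt
  refine hS.2 i hi (mem_burnt_of_mem_take ?_ hj)
  exact List.mem_take_iff_getElem.2 ⟨i, by omega, rfl⟩

lemma notMem_burntSet_of_forall_adj {x : V} (hxs : x ≠ s)
    (hx : ∀ y, G.Adj x y → y ∉ BurntSet G s S) : x ∉ BurntSet G s S := by
  rw [mem_burntSet]
  rintro ⟨i, hi⟩
  induction i with
  | zero => exact hxs hi
  | succ i ih =>
    rcases hi with hi | ⟨-, b, hb, hxb⟩
    · exact ih hi
    · exact hx b hxb (mem_burntSet.2 ⟨i, hb⟩)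

end Firefighting

section EdgesWithin

variable {G : SimpleGraph V} (A : Finset V)

lemma edgeSet_inter_sym2_subset [DecidableEq V] :
    G.edgeSet ∩ ↑A.sym2 ⊆ ↑(A.offDiag.image Sym2.mk.uncurry) := by
  rintro e ⟨he, heA⟩
  induction e using Sym2.ind with
  | _ a b =>
    rw [Finset.mem_coe, Finset.mem_sym2_iff] at heA
    exact Finset.mem_image.2 ⟨(a, b), Finset.mem_offDiag.2 ⟨heA a (Sym2.mem_mk_left a b),
      heA b (Sym2.mem_mk_right a b), G.ne_of_adj he⟩, rfl⟩

lemma ncard_edgeSet_inter_sym2_le : (G.edgeSet ∩ ↑A.sym2).ncard ≤ A.card.choose 2 := by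
  classical
  rw [← Sym2.card_image_offDiag, ← Set.ncard_coe_finset]
  exact Set.ncard_le_ncard (edgeSet_inter_sym2_subset A)

lemma SimpleGraph.IsClique.ncard_edgeSet_inter_sym2 {A : Finset V} (hA : G.IsClique (A : Set V)) :
    (G.edgeSet ∩ ↑A.sym2).ncard = A.card.choose 2 := by
  classical
  refine (ncard_edgeSet_inter_sym2_le A).antisymm ?_
  rw [← Sym2.card_image_offDiag, ← Set.ncard_coe_finset]
  refine Set.ncard_le_ncard ?_ ((A.sym2.finite_toSet).inter_of_right _)
  intro e he
  obtain ⟨⟨a, b⟩, hab, rfl⟩ := Finset.mem_image.1 he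
  obtain ⟨ha, hb, hne⟩ := Finset.mem_offDiag.1 hab
  refine ⟨hA ha hb hne, Finset.mem_sym2_iff.2 fun w hw => ?_⟩
  rcases Sym2.mem_iff.1 hw with rfl | rfl <;> assumption

lemma ncard_edgeSet_inter_sym2_lt_of_not_isClique {A : Finset V} (hA : ¬ G.IsClique (A : Set V)) :
    (G.edgeSet ∩ ↑A.sym2).ncard < A.card.choose 2 := by
  classical
  obtain ⟨a, ha, b, hb, hne, hab⟩ : ∃ a ∈ A, ∃ b ∈ A, a ≠ b ∧ ¬ G.Adj a b := by
    simpa [SimpleGraph.IsClique, Set.Pairwise] using hA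
  rw [← Sym2.card_image_offDiag, ← Set.ncard_coe_finset]
  refine Set.ncard_lt_ncard (Set.ssubset_iff_of_subset (edgeSet_inter_sym2_subset A) |>.2
    ⟨s(a, b), Finset.mem_image.2 ⟨(a, b), Finset.mem_offDiag.2 ⟨ha, hb, hne⟩, rfl⟩, ?_⟩)
  exact fun h => hab h.1

lemma SimpleGraph.CliqueFree.ncard_edgeSet_inter_sym2_lt {k : ℕ} (hG : G.CliqueFree k)
    (hk : 2 ≤ k) {A : Finset V} (hA : A.card ≤ k) :
    (G.edgeSet ∩ ↑A.sym2).ncard < k.choose 2 := by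
  rcases hA.eq_or_lt with hAk | hAk
  · have hA : ¬ G.IsClique (A : Set V) := fun hc => hG A ⟨hc, hAk⟩
    exact hAk ▸ ncard_edgeSet_inter_sym2_lt_of_not_isClique hA
  · calc (G.edgeSet ∩ ↑A.sym2).ncard ≤ A.card.choose 2 := ncard_edgeSet_inter_sym2_le A
      _ ≤ (k - 1).choose 2 := Nat.choose_le_choose 2 (by omega)
      _ < k.choose 2 := by
        obtain ⟨n, rfl⟩ : ∃ n, k = n + 1 := ⟨k - 1, by omega⟩
        rw [Nat.add_sub_cancel, Nat.choose_succ_succ' n 1, Nat.choose_one_right]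
        simp only [Nat.reduceAdd]
        omega

lemma exists_mem_edgeSet_notMem_sym2 (hA : A.card.choose 2 < G.edgeSet.ncard) :
    ∃ e ∈ G.edgeSet, e ∉ A.sym2 := by
  by_contra! h
  have : G.edgeSet ⊆ G.edgeSet ∩ ↑A.sym2 := fun e he => ⟨he, h e he⟩
  have := Set.ncard_le_ncard this ((A.sym2.finite_toSet).inter_of_right _)
  have := ncard_edgeSet_inter_sym2_le (G := G) A
  omega

end EdgesWithin

section Reduction

variable {G : SimpleGraph V} {k : ℕ}

abbrev ffSource : FFVerts' V G k := Sum.inl ()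
abbrev ffGrid (d : Fin (k - 1) × Fin k) : FFVerts' V G k := Sum.inr (Sum.inl d)
abbrev ffVert (v : V) : FFVerts' V G k := Sum.inr (Sum.inr (Sum.inl v))
abbrev ffEdge (e : G.edgeSet) : FFVerts' V G k := Sum.inr (Sum.inr (Sum.inr e))

lemma ffVert_injective : Function.Injective (ffVert (G := G) (k := k)) :=
  fun _ _ h => by simpa using h

lemma ffEdge_injective : Function.Injective (ffEdge (V := V) (G := G) (k := k)) :=
  fun _ _ h => by simpa using h

lemma adj_ffSource_ffGrid {d : Fin (k - 1) × Fin k} (h : (d.1 : ℕ) = 0) :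
    (FFGraph' V G k).Adj ffSource (ffGrid d) := by
  simp [FFGraph', ffRel', h]

lemma adj_ffGrid_ffGrid {d d' : Fin (k - 1) × Fin k} (h : (d'.1 : ℕ) = d.1 + 1) :
    (FFGraph' V G k).Adj (ffGrid d) (ffGrid d') := by
  refine (fromRel_adj _ _ _).2 ⟨fun hdd => ?_, Or.inl h⟩
  simp only [Sum.inr.injEq, Sum.inl.injEq, Prod.ext_iff, Fin.ext_iff] at hdd
  omega

lemma adj_ffGrid_ffVert {d : Fin (k - 1) × Fin k} {w : V} (h : (d.1 : ℕ) = k - 2) :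
    (FFGraph' V G k).Adj (ffGrid d) (ffVert w) := by
  simp [FFGraph', ffRel', h]

lemma adj_ffVert_ffEdge {w : V} {e : G.edgeSet} (h : w ∈ (e : Sym2 V)) :
    (FFGraph' V G k).Adj (ffVert w) (ffEdge e) := by
  simp [FFGraph', ffRel', h]

lemma eq_ffVert_of_adj_ffEdge {e : G.edgeSet} {x : FFVerts' V G k}
    (h : (FFGraph' V G k).Adj (ffEdge e) x) : ∃ w ∈ (e : Sym2 V), x = ffVert w := by
  rcases x with _ | _ | w | _ <;> simp_all [FFGraph', ffRel']

/-- The vertices `J_{uv}` with `u, v ∈ A`. -/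
def ffEdgesWithin (A : Finset V) : Set (FFVerts' V G k) := ffEdge '' (Subtype.val ⁻¹' ↑A.sym2)

/-- The distance from the source in `H`. -/
def ffLevel : FFVerts' V G k → ℕ
  | Sum.inl _ => 0
  | Sum.inr (Sum.inl d) => d.1 + 1
  | Sum.inr (Sum.inr (Sum.inl _)) => k
  | Sum.inr (Sum.inr (Sum.inr _)) => k + 1

lemma ffLevel_le_of_adj {u b : FFVerts' V G k} (h : (FFGraph' V G k).Adj u b) :
    ffLevel u ≤ ffLevel b + 1 := by
  rcases u with _ | ⟨⟨_, _⟩, _⟩ | _ | _ <;>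
    rcases b with _ | ⟨⟨_, _⟩, _⟩ | _ | _ <;>
    simp [FFGraph', ffRel', ffLevel] at h ⊢ <;> omega

lemma exists_ffGrid_notMem_take (S : List (FFVerts' V G k)) {i m : ℕ} (hi : i < k - 1)
    (hm : m < k) : ∃ j, ffGrid (⟨i, hi⟩, j) ∉ S.take m := by
  classical
  by_contra! h
  have hrow := Finset.card_le_card_of_injOn (s := Finset.univ) (t := (S.take m).toFinset)
    (fun j => ffGrid (G := G) (⟨i, hi⟩, j)) (fun j _ => List.mem_toFinset.2 (h j))
    (fun j _ j' _ hjj' => by simpa using hjj')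
  have := (S.take m).toFinset_card_le
  simp only [Finset.card_univ, Fintype.card_fin, List.length_take] at hrow this
  omega

/-- At each level of the grid fewer than `k` vertices can have been defended in time, so the fire
crosses the grid at full speed. -/
lemma exists_ffGrid_mem_burnt (S : List (FFVerts' V G k)) (i : ℕ) (hi : i < k - 1) :
    ∃ j, ffGrid (⟨i, hi⟩, j) ∈ burnt (FFGraph' V G k) ffSource S (i + 1) := by
  induction i with
  | zero =>
    obtain ⟨j, hj⟩ := exists_ffGrid_notMem_take (G := G) S hi (by omega : 1 < k)
    exact ⟨j, mem_burnt_succ (start_mem_burnt 0) (adj_ffSource_ffGrid rfl).symm hj⟩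
  | succ i ih =>
    obtain ⟨j', hj'⟩ := ih (by omega)
    obtain ⟨j, hj⟩ := exists_ffGrid_notMem_take (G := G) S hi (by omega : i + 2 < k)
    exact ⟨j, mem_burnt_succ hj' (adj_ffGrid_ffGrid rfl).symm hj⟩

lemma ffGrid_mem_burnt (S : List (FFVerts' V G k)) {d : Fin (k - 1) × Fin k}
    (hd : ffGrid d ∉ S.take (d.1 + 1)) :
    ffGrid d ∈ burnt (FFGraph' V G k) ffSource S (d.1 + 1) := by
  obtain ⟨⟨_ | i, hi⟩, j⟩ := d
  · exact mem_burnt_succ (start_mem_burnt 0) (adj_ffSource_ffGrid rfl).symm hd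
  · obtain ⟨j', hj'⟩ := exists_ffGrid_mem_burnt S i (by omega)
    exact mem_burnt_succ hj' (adj_ffGrid_ffGrid rfl).symm hd

lemma ffVert_mem_burnt (hk : 2 ≤ k) (S : List (FFVerts' V G k)) {w : V}
    (hw : ffVert w ∉ S.take k) : ffVert w ∈ burnt (FFGraph' V G k) ffSource S k := by
  obtain ⟨j, hj⟩ := exists_ffGrid_mem_burnt S (k - 2) (by omega)
  obtain ⟨n, rfl⟩ : ∃ n, k = n + 2 := ⟨k - 2, by omega⟩
  exact mem_burnt_succ hj (adj_ffGrid_ffVert rfl).symm hw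

lemma ffEdge_mem_burnt (hk : 2 ≤ k) (S : List (FFVerts' V G k)) {e : G.edgeSet} {w : V}
    (hwe : w ∈ (e : Sym2 V)) (hw : ffVert w ∉ S.take k) (he : ffEdge e ∉ S.take (k + 1)) :
    ffEdge e ∈ burnt (FFGraph' V G k) ffSource S (k + 1) :=
  mem_burnt_succ (ffVert_mem_burnt hk S hw) (adj_ffVert_ffEdge hwe).symm he

/-- `A` is the set of vertices of `G` defended during the first `k` moves. -/
lemma exists_compl_burntSet_subset (hk : 2 ≤ k) (S : List (FFVerts' V G k)) :
    ∃ A : Finset V, A.card ≤ k ∧ (BurntSet (FFGraph' V G k) ffSource S)ᶜ ⊆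
      {x | x ∈ S.take (k + 1)} ∪ ffEdgesWithin A := by
  classical
  refine ⟨(S.take k).toFinset.preimage ffVert ffVert_injective.injOn, ?_, ?_⟩
  · calc _ ≤ (S.take k).toFinset.card :=
          Finset.card_le_card_of_injOn ffVert (fun w hw => Finset.mem_preimage.1 hw)
            ffVert_injective.injOn
      _ ≤ (S.take k).length := List.toFinset_card_le _
      _ ≤ k := List.length_take_le _ _
  rintro x hx
  have hburnt : ∀ i, x ∉ burnt (FFGraph' V G k) ffSource S i :=
    fun i hi => hx (mem_burntSet.2 ⟨i, hi⟩)
  rcases x with _ | d | w | e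
  · exact absurd (start_mem_burnt 0) (hburnt 0)
  · by_contra hd
    refine hburnt _ (ffGrid_mem_burnt S fun hd' => hd (Or.inl ?_))
    exact S.take_subset_take_left (by omega) hd'
  · by_contra hw
    refine hburnt _ (ffVert_mem_burnt hk S fun hw' => hw (Or.inl ?_))
    exact S.take_subset_take_left (by omega) hw'
  · by_cases he : ffEdge e ∈ S.take (k + 1)
    · exact Or.inl he
    refine Or.inr ⟨e, Finset.mem_sym2_iff.2 fun w hwe => ?_, rfl⟩
    by_contra hw
    exact hburnt _ (ffEdge_mem_burnt hk S hwe (by simpa using hw) he)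

lemma ncard_ffEdgesWithin (A : Finset V) :
    (ffEdgesWithin A : Set (FFVerts' V G k)).ncard = (G.edgeSet ∩ ↑A.sym2).ncard := by
  rw [ffEdgesWithin, Set.ncard_image_of_injective _ ffEdge_injective,
    ← Subtype.image_preimage_coe, Set.ncard_image_of_injective _ Subtype.val_injective]

lemma finite_ffEdgesWithin (A : Finset V) :
    (ffEdgesWithin A : Set (FFVerts' V G k)).Finite :=
  ((A.sym2.finite_toSet).preimage Subtype.val_injective.injOn).image _

lemma finite_compl_burntSet (hk : 2 ≤ k) (S : List (FFVerts' V G k)) :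
    (BurntSet (FFGraph' V G k) ffSource S)ᶜ.Finite := by
  obtain ⟨A, -, hA⟩ := exists_compl_burntSet_subset hk S
  exact ((S.take (k + 1)).finite_toSet.union (finite_ffEdgesWithin A)).subset hA

lemma sav_le_of_cliqueFree (hk : 2 ≤ k) (hG : G.CliqueFree k) (S : List (FFVerts' V G k)) :
    sav (FFGraph' V G k) ffSource S ≤ k + k.choose 2 := by
  classical
  obtain ⟨A, hAk, hA⟩ := exists_compl_burntSet_subset hk S
  have hdefended : ({x | x ∈ S.take (k + 1)} : Set (FFVerts' V G k)).ncard ≤ k + 1 := by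
    rw [← List.coe_toFinset, Set.ncard_coe_finset]
    exact ((S.take (k + 1)).toFinset_card_le).trans (List.length_take_le _ _)
  have hedges := ncard_ffEdgesWithin (k := k) A ▸ hG.ncard_edgeSet_inter_sym2_lt hk hAk
  calc sav (FFGraph' V G k) ffSource S
      ≤ ({x | x ∈ S.take (k + 1)} ∪ ffEdgesWithin A).ncard :=
        Set.ncard_le_ncard hA ((S.take (k + 1)).finite_toSet.union (finite_ffEdgesWithin A))
    _ ≤ _ := Set.ncard_union_le _ _
    _ ≤ k + k.choose 2 := by omega

noncomputable def cliqueStrategy (K : Finset V) (e₀ : G.edgeSet) : List (FFVerts' V G k) :=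
  K.toList.map ffVert ++ [ffEdge e₀]

variable {K : Finset V} {e₀ : G.edgeSet}

lemma mem_cliqueStrategy {x : FFVerts' V G k} :
    x ∈ cliqueStrategy K e₀ ↔ (∃ w ∈ K, x = ffVert w) ∨ x = ffEdge e₀ := by
  simp [cliqueStrategy, eq_comm]

lemma validStrategy_cliqueStrategy (hK : K.card = k) :
    ValidStrategy (FFGraph' V G k) ffSource (cliqueStrategy K e₀) := by
  have hlen : (K.toList.map (ffVert (G := G) (k := k))).length = k := by simp [hK]
  refine validStrategy_of_lt rfl (fun _ _ => ffLevel_le_of_adj) ?_ fun i hi => ?_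
  · exact List.nodup_append.2
      ⟨K.nodup_toList.map ffVert_injective, List.nodup_singleton _, by simp⟩
  · simp only [cliqueStrategy, List.length_append, hlen, List.length_singleton] at hi
    simp only [cliqueStrategy, List.get_eq_getElem]
    rcases Nat.lt_or_ge i k with hik | hik
    · rw [List.getElem_append_left (by omega)]
      simpa [ffLevel] using hik
    · obtain rfl : i = k := by omega
      rw [List.getElem_append_right (by omega)]
      simp [ffLevel]

lemma cliqueStrategy_saves (hk : 2 ≤ k) (hK : G.IsClique (K : Set V)) (hKk : K.card = k)
    (he₀ : (e₀ : Sym2 V) ∉ K.sym2) :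
    k + k.choose 2 + 1 ≤ sav (FFGraph' V G k) ffSource (cliqueStrategy K e₀) := by
  classical
  set S := cliqueStrategy (k := k) K e₀
  have hS := validStrategy_cliqueStrategy (e₀ := e₀) hKk
  have hinner : ffEdgesWithin K ⊆ (BurntSet (FFGraph' V G k) ffSource S)ᶜ := by
    rintro _ ⟨e, he, rfl⟩
    refine notMem_burntSet_of_forall_adj (by simp) fun y hy => ?_
    obtain ⟨w, hwe, rfl⟩ := eq_ffVert_of_adj_ffEdge hy
    exact hS.notMem_burntSet
      (mem_cliqueStrategy.2 (Or.inl ⟨w, Finset.mem_sym2_iff.1 he w hwe, rfl⟩))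
  have hdisj : Disjoint (↑S.toFinset : Set (FFVerts' V G k)) (ffEdgesWithin K) := by
    rw [Set.disjoint_left]
    rintro _ hx ⟨e, he, rfl⟩
    rcases mem_cliqueStrategy.1 (List.mem_toFinset.1 hx) with ⟨w, -, hw⟩ | hx
    · simp at hw
    · exact he₀ (ffEdge_injective hx ▸ he)
  have hcard : S.toFinset.card = k + 1 := by
    rw [List.toFinset_card_of_nodup hS.1]
    simp [cliqueStrategy, hKk]
  calc k + k.choose 2 + 1
      = ((↑S.toFinset : Set (FFVerts' V G k)) ∪ ffEdgesWithin K).ncard := by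
        rw [Set.ncard_union_eq hdisj (Finset.finite_toSet _) (finite_ffEdgesWithin K),
          Set.ncard_coe_finset, hcard, ncard_ffEdgesWithin, hK.ncard_edgeSet_inter_sym2, hKk]
        ring
    _ ≤ sav (FFGraph' V G k) ffSource S :=
        Set.ncard_le_ncard (Set.union_subset (fun x hx => hS.notMem_burntSet
          (List.mem_toFinset.1 hx)) hinner) (finite_compl_burntSet hk S)

end Reduction

theorem saving_iff_clique_stars_general {V : Type*} (G : SimpleGraph V)
    (k : ℕ) (hk : 2 ≤ k) (hE : k * (k - 1) / 2 < G.edgeSet.ncard) :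
    (∃ S : List (FFVerts' V G k), ValidStrategy (FFGraph' V G k) (Sum.inl ()) S ∧
      k + k * (k - 1) / 2 + 1 ≤ sav (FFGraph' V G k) (Sum.inl ()) S) ↔
    (∃ K : Finset V, K.card = k ∧ (↑K : Set V).Pairwise G.Adj) := by
  rw [← Nat.choose_two_right] at hE ⊢
  constructor
  · rintro ⟨S, -, hS⟩
    by_contra hno
    have hG : G.CliqueFree k := fun K hK => hno ⟨K, hK.card_eq, hK.isClique⟩
    have : sav (FFGraph' V G k) (Sum.inl ()) S ≤ k + k.choose 2 := sav_le_of_cliqueFree hk hG S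
    omega
  · rintro ⟨K, hKk, hK⟩
    obtain ⟨e₀, he₀, he₀K⟩ := exists_mem_edgeSet_notMem_sym2 K (hKk ▸ hE)
    exact ⟨cliqueStrategy K ⟨e₀, he₀⟩, validStrategy_cliqueStrategy hKk,
      cliqueStrategy_saves hk hK hKk he₀K⟩

/-- For `k ≥ 2` and `|E(G)| > k(k−1)/2`, there is a valid strategy on `(H, s)`
saving at least `k + k(k−1)/2 + 1` vertices iff `G` contains a clique on `k` vertices. -/
theorem saving_iff_clique_stars {V : Type*} [Fintype V] (G : SimpleGraph V)
    (k : ℕ) (hk : 2 ≤ k) (hE : k * (k - 1) / 2 < G.edgeSet.ncard) :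
    (∃ S : List (FFVerts' V G k), ValidStrategy (FFGraph' V G k) (Sum.inl ()) S ∧
      k + k * (k - 1) / 2 + 1 ≤ sav (FFGraph' V G k) (Sum.inl ()) S) ↔
    (∃ K : Finset V, K.card = k ∧ (↑K : Set V).Pairwise G.Adj) :=
  saving_iff_clique_stars_general G k hk hE
end
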